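/- arXiv:2407.08789 — 3 statements merged into one kernel-verified Lean document; each statement's English description precedes it below -/
import Mathlib

section
/- Let n ≥ 2 and let C be the complex on [n] = {1,…,n} consisting of all sets e ⊆ [n] with |e| ≤ ⌊n/2⌋ or n ∉ e. If C is the intersection of the independent-set families of t matroids on [n], then t ≥ binom(n−1, ⌊n/2⌋). -/
/-- A matroid on the full ground set `V`, given by its family of independent sets. -/
def IsMatroid {V : Type*} [DecidableEq V] (M : Set (Finset V)) : Prop :=
  (∅ : Finset V) ∈ M ∧ (∀ S ∈ M, ∀ T, T ⊆ S → T ∈ M) ∧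
  ∀ S ∈ M, ∀ T ∈ M, S.card < T.card → ∃ v ∈ T \ S, insert v S ∈ M

/-- Let `V` have `n ≥ 2` elements, `v0 ∈ V` a distinguished element
(playing the role of `n ∈ [n]`), and let `C = {e | |e| ≤ ⌊n/2⌋ ∨ v0 ∉ e}`. If `C` is the
intersection of `t` matroids on `V` then `t ≥ binom(n-1, ⌊n/2⌋)`. -/
theorem stmt_3 {V : Type*} [Fintype V] [DecidableEq V]
    (n : ℕ) (hn : 2 ≤ n) (hcard : Fintype.card V = n) (v0 : V)
    (t : ℕ) (M : Fin t → Set (Finset V)) (hM : ∀ i, IsMatroid (M i))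
    (hC : {e : Finset V | e.card ≤ n / 2 ∨ v0 ∉ e} = ⋂ i, M i) :
    (n - 1).choose (n / 2) ≤ t := by
  classical
  set k := n / 2 with hk
  have hk1 : 1 ≤ k := Nat.one_le_div_iff (by norm_num) |>.mpr hn
  have hmem : ∀ (e : Finset V), (e.card ≤ k ∨ v0 ∉ e) → ∀ i, e ∈ M i := by
    intro e he i
    have h : e ∈ {e : Finset V | e.card ≤ n / 2 ∨ v0 ∉ e} := he
    rw [hC] at h
    exact Set.mem_iInter.mp h i
  set S := (Finset.univ.erase v0).powersetCard k with hS
  -- every B in S gives some matroid excluding insert v0 B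
  have hex : ∀ B ∈ S, ∃ i, insert v0 B ∉ M i := by
    intro B hB
    rw [Finset.mem_powersetCard] at hB
    obtain ⟨hBsub, hBcard⟩ := hB
    have hv0B : v0 ∉ B := fun h => (Finset.mem_erase.mp (hBsub h)).1 rfl
    have hnotC : insert v0 B ∉ {e : Finset V | e.card ≤ n / 2 ∨ v0 ∉ e} := by
      simp only [Set.mem_setOf_eq, not_or, not_le, not_not]
      constructor
      · rw [Finset.card_insert_of_notMem hv0B, hBcard]
        omega
      · exact Finset.mem_insert_self _ _
    rw [hC] at hnotC
    by_contra h
    push_neg at h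
    exact hnotC (Set.mem_iInter.mpr h)
  -- key injectivity
  have key : ∀ B1 ∈ S, ∀ B2 ∈ S, ∀ i : Fin t,
      insert v0 B1 ∉ M i → insert v0 B2 ∉ M i → B1 = B2 := by
    intro B1 h1 B2 h2 i hni1 hni2
    by_contra hne
    rw [Finset.mem_powersetCard] at h1 h2
    obtain ⟨hB1sub, hB1card⟩ := h1
    obtain ⟨hB2sub, hB2card⟩ := h2
    have hv0B1 : v0 ∉ B1 := fun h => (Finset.mem_erase.mp (hB1sub h)).1 rfl
    have hv0B2 : v0 ∉ B2 := fun h => (Finset.mem_erase.mp (hB2sub h)).1 rfl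
    set U := B1 ∪ B2 with hUdef
    have hv0U : v0 ∉ U := by simp [hUdef, hv0B1, hv0B2]
    have hU : U ∈ M i := hmem U (Or.inr hv0U) i
    have hy : ∃ y, y ∈ B1 \ B2 := by
      by_contra h
      push_neg at h
      have hsub : B1 ⊆ B2 := fun x hx => by
        by_contra hx2
        exact h x (Finset.mem_sdiff.mpr ⟨hx, hx2⟩)
      exact hne (Finset.eq_of_subset_of_card_le hsub (hB2card.trans hB1card.symm).le)
    obtain ⟨y, hy⟩ := hy
    have hyB1 := (Finset.mem_sdiff.mp hy).1
    have hyB2 := (Finset.mem_sdiff.mp hy).2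
    set I0 := insert v0 (B1.erase y) with hI0def
    have hv0e : v0 ∉ B1.erase y := fun h => hv0B1 (Finset.mem_of_mem_erase h)
    have hI0card : I0.card ≤ k := by
      rw [hI0def, Finset.card_insert_of_notMem hv0e,
        Finset.card_erase_of_mem hyB1, hB1card]
      omega
    have hI0 : I0 ∈ M i := hmem I0 (Or.inl hI0card) i
    have hI0sub : I0 ⊆ insert v0 U :=
      Finset.insert_subset_insert _ ((Finset.erase_subset _ _).trans Finset.subset_union_left)
    set T := (insert v0 U).powerset.filter (fun J => I0 ⊆ J ∧ J ∈ M i) with hT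
    have hTne : T.Nonempty := ⟨I0, by
      simp only [hT, Finset.mem_filter, Finset.mem_powerset]
      exact ⟨hI0sub, le_refl _, hI0⟩⟩
    obtain ⟨I, hIT, hImax⟩ := T.exists_max_image Finset.card hTne
    rw [hT, Finset.mem_filter, Finset.mem_powerset] at hIT
    obtain ⟨hIsub, hI0I, hIM⟩ := hIT
    have hv0I : v0 ∈ I := hI0I (Finset.mem_insert_self _ _)
    have hyI : y ∉ I := by
      intro hyI
      apply hni1
      have hsub : insert v0 B1 ⊆ I := by
        intro x hx
        rcases Finset.mem_insert.mp hx with rfl | hx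
        · exact hv0I
        · by_cases hxy : x = y
          · exact hxy ▸ hyI
          · exact hI0I (Finset.mem_insert_of_mem (Finset.mem_erase.mpr ⟨hxy, hx⟩))
      exact (hM i).2.1 I hIM _ hsub
    have hz : ∃ z ∈ B2, z ∉ I := by
      by_contra h
      push_neg at h
      apply hni2
      refine (hM i).2.1 I hIM _ ?_
      intro x hx
      rcases Finset.mem_insert.mp hx with rfl | hx
      · exact hv0I
      · exact h x hx
    obtain ⟨z, hzB2, hzI⟩ := hz
    have hzy : z ≠ y := fun h => hyB2 (h ▸ hzB2)
    have hIcard : I.card < U.card := by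
      have hsub2 : I ⊆ (insert v0 U) \ {y, z} := by
        intro x hx
        rw [Finset.mem_sdiff]
        refine ⟨hIsub hx, ?_⟩
        simp only [Finset.mem_insert, Finset.mem_singleton, not_or]
        constructor
        · rintro rfl; exact hyI hx
        · rintro rfl; exact hzI hx
      have hyzsub : ({y, z} : Finset V) ⊆ insert v0 U := by
        intro x hx
        rcases Finset.mem_insert.mp hx with rfl | hx
        · exact Finset.mem_insert_of_mem (Finset.mem_union_left _ hyB1)
        · rw [Finset.mem_singleton] at hx
          exact hx ▸ Finset.mem_insert_of_mem (Finset.mem_union_right _ hzB2)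
      have hcyz : ({y, z} : Finset V).card = 2 := by
        rw [Finset.card_insert_of_notMem (by simp [Ne.symm hzy]), Finset.card_singleton]
      have h1 := Finset.card_le_card hsub2
      rw [Finset.card_sdiff_of_subset hyzsub, Finset.card_insert_of_notMem hv0U, hcyz] at h1
      have hUpos : 1 ≤ U.card := Finset.card_pos.mpr ⟨y, Finset.mem_union_left _ hyB1⟩
      omega
    obtain ⟨v, hv, hvI⟩ := (hM i).2.2 I hIM U hU hIcard
    rw [Finset.mem_sdiff] at hv
    have hvT : insert v I ∈ T := by
      rw [hT, Finset.mem_filter, Finset.mem_powerset]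
      refine ⟨Finset.insert_subset (Finset.mem_insert_of_mem hv.1) hIsub,
        hI0I.trans (Finset.subset_insert _ _), hvI⟩
    have := hImax _ hvT
    rw [Finset.card_insert_of_notMem hv.2] at this
    omega
  -- counting
  rcases Nat.eq_zero_or_pos t with ht | ht
  · subst ht
    have hSne : S.Nonempty := by
      rw [hS, Finset.powersetCard_nonempty]
      rw [Finset.card_erase_of_mem (Finset.mem_univ v0), Finset.card_univ, hcard]
      omega
    obtain ⟨B, hB⟩ := hSne
    obtain ⟨i, _⟩ := hex B hB
    exact absurd i.2 (by omega)
  · have hft : ∀ B, ∃ i : Fin t, B ∈ S → insert v0 B ∉ M i := by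
      intro B
      by_cases hB : B ∈ S
      · obtain ⟨i, hi⟩ := hex B hB
        exact ⟨i, fun _ => hi⟩
      · exact ⟨⟨0, ht⟩, fun h => absurd h hB⟩
    choose f hf using hft
    have hinj : Set.InjOn f S := by
      intro B1 h1 B2 h2 hfe
      exact key B1 h1 B2 h2 (f B1) (hf B1 h1) (hfe ▸ hf B2 h2)
    have hle : S.card ≤ (Finset.univ : Finset (Fin t)).card :=
      Finset.card_le_card_of_injOn f (fun _ _ => Finset.mem_univ _) hinj
    rw [Finset.card_univ, Fintype.card_fin] at hle
    rw [hS, Finset.card_powersetCard, Finset.card_erase_of_mem (Finset.mem_univ v0),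
      Finset.card_univ, hcard] at hle
    exact hle
end

section
/- Let M₁, …, M_k be matroids on a common finite ground set V and let w : V → ℝ≥0. Then the fractional w-covering number τ*_w of the k-tuple is at most k times the maximum weight ν_w of a common independent set: τ*_w ≤ k·ν_w. -/
/-- The span (closure) of `A` in the matroid `M`. -/
def spanM {V : Type*} [DecidableEq V] (M : Set (Finset V)) (A : Finset V) : Set V :=
  {x | x ∈ A ∨ ∃ S : Finset V, S ⊆ A ∧ S ∈ M ∧ insert x S ∉ M}

/-- `(f₁,…,f_k)` is a `w`-fractional cover: `∑ᵢ fᵢ^{Mᵢ}(v) ≥ w v` for every `v`, where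
`fᵢ^{Mᵢ}(v) = max_{T : v ∈ span_{Mᵢ}(T)} min_{u ∈ T} fᵢ(u)` (expressed via witnesses
`T i` and lower bounds `r i`). -/
def IsFracCover {V : Type*} [Fintype V] [DecidableEq V] (k : ℕ)
    (M : Fin k → Set (Finset V)) (w : V → ℝ) (f : Fin k → V → ℝ) : Prop :=
  (∀ i v, 0 ≤ f i v) ∧
  ∀ v : V, ∃ (T : Fin k → Finset V) (r : Fin k → ℝ),
    (∀ i, v ∈ spanM (M i) (T i)) ∧ (∀ i, ∀ u ∈ T i, r i ≤ f i u) ∧ w v ≤ ∑ i, r i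

/-!
Let `I` be a maximum-weight common independent set and give every matroid the weight `w`
restricted to `I`; this costs `k · w(I)`. A point of `I`, or a loop of some `Mᵢ`, is covered
by a single coordinate. For any other `v`, in each `Mᵢ` either `I + v` is independent, or `v`
is spanned by `Dᵢ ⊆ I`, the rest of its fundamental circuit in `I + v`; then `v` gets weight at
least `w(uᵢ)` for the lightest `uᵢ ∈ Dᵢ`, and `I - uᵢ + v` is independent in `Mᵢ`. So `I + v`
minus all the `uᵢ` is common independent, and maximality of `I` gives `w(v) ≤ ∑ᵢ w(uᵢ)`.
-/

section

variable {V : Type*} [DecidableEq V]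

namespace IsMatroid

variable {M : Set (Finset V)}

theorem mem_of_subset (hM : IsMatroid M) {S T : Finset V} (hS : S ∈ M) (hTS : T ⊆ S) : T ∈ M :=
  hM.2.1 S hS T hTS

theorem exists_superset_card_eq (hM : IsMatroid M) {C B : Finset V} (hC : C ∈ M) (hB : B ∈ M)
    (hCB : C.card ≤ B.card) : ∃ C', C ⊆ C' ∧ C' ⊆ C ∪ B ∧ C'.card = B.card ∧ C' ∈ M := by
  induction h : B.card - C.card generalizing C with
  | zero => exact ⟨C, subset_rfl, Finset.subset_union_left, by omega, hC⟩
  | succ n ih =>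
    obtain ⟨x, hx, hxC⟩ := hM.2.2 C hC B hB (by omega)
    rw [Finset.mem_sdiff] at hx
    have hcard : (insert x C).card = C.card + 1 := Finset.card_insert_of_notMem hx.2
    obtain ⟨C', hxCC', hC'B, hC'card, hC'⟩ := ih hxC (by omega) (by omega)
    refine ⟨C', (Finset.subset_insert x C).trans hxCC', hC'B.trans (subset_of_eq ?_), hC'card, hC'⟩
    rw [Finset.insert_union, Finset.insert_eq_of_mem (Finset.mem_union_right C hx.1)]

theorem insert_erase_mem_of_minimal (hM : IsMatroid M) {I D : Finset V} {v u : V} (hI : I ∈ M)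
    (hv : v ∉ I) (hDI : D ⊆ I) (hdep : insert v D ∉ M)
    (hmin : ∀ u ∈ D, insert v (D.erase u) ∈ M) (hu : u ∈ D) : insert v (I.erase u) ∈ M := by
  have hvD : v ∉ D := fun h => hv (hDI h)
  have huv : u ≠ v := fun h => hvD (h ▸ hu)
  have hcard : (insert v (D.erase u)).card ≤ I.card := by
    rw [Finset.card_insert_of_notMem (fun h => hvD (Finset.mem_of_mem_erase h)),
      Finset.card_erase_add_one hu]
    exact Finset.card_le_card hDI
  obtain ⟨C, hDC, hCI, hCcard, hC⟩ := hM.exists_superset_card_eq (hmin u hu) hI hcard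
  -- Otherwise `C` would contain the dependent set `insert v D`.
  have huC : u ∉ C := fun huC => hdep <| hM.mem_of_subset hC fun x hx => by
    rcases Finset.mem_insert.1 hx with rfl | hxD
    · exact hDC (Finset.mem_insert_self _ _)
    · by_cases hxu : x = u
      · exact hxu ▸ huC
      · exact hDC (Finset.mem_insert_of_mem (Finset.mem_erase.2 ⟨hxu, hxD⟩))
  have hsub : C ⊆ (insert v I).erase u := fun x hx => by
    refine Finset.mem_erase.2 ⟨fun h => huC (h ▸ hx), ?_⟩
    rcases Finset.mem_union.1 (hCI hx) with hx' | hx'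
    · exact Finset.insert_subset_insert v ((Finset.erase_subset u D).trans hDI) hx'
    · exact Finset.mem_insert_of_mem hx'
  have hcard' : ((insert v I).erase u).card ≤ C.card := by
    rw [Finset.card_erase_of_mem (Finset.mem_insert_of_mem (hDI hu)),
      Finset.card_insert_of_notMem hv, hCcard]
    omega
  rw [← Finset.erase_insert_of_ne huv.symm, ← Finset.eq_of_subset_of_card_le hsub hcard']
  exact hC

theorem exists_circuit_exchange (hM : IsMatroid M) {I : Finset V} {v : V} (hI : I ∈ M)
    (hv : v ∉ I) (hvI : insert v I ∉ M) (hv₀ : {v} ∈ M) :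
    ∃ D ⊆ I, D.Nonempty ∧ insert v D ∉ M ∧ ∀ u ∈ D, insert v (I.erase u) ∈ M := by
  classical
  obtain ⟨D, hDmem, hDmin⟩ := Finset.exists_min_image
    (I.powerset.filter fun D => insert v D ∉ M) Finset.card
    ⟨I, Finset.mem_filter.2 ⟨Finset.mem_powerset_self I, hvI⟩⟩
  rw [Finset.mem_filter, Finset.mem_powerset] at hDmem
  obtain ⟨hDI, hdep⟩ := hDmem
  have hmin : ∀ u ∈ D, insert v (D.erase u) ∈ M := fun u hu => by
    by_contra h
    have := hDmin (D.erase u) (Finset.mem_filter.2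
      ⟨Finset.mem_powerset.2 ((Finset.erase_subset u D).trans hDI), h⟩)
    exact absurd (Finset.card_erase_lt_of_mem hu) (not_lt.2 this)
  refine ⟨D, hDI, Finset.nonempty_iff_ne_empty.2 ?_, hdep, fun u hu =>
    hM.insert_erase_mem_of_minimal hI hv hDI hdep hmin hu⟩
  rintro rfl
  exact hdep hv₀

theorem exists_span_exchange (hM : IsMatroid M) {I : Finset V} {v : V} (hI : I ∈ M)
    (hv : v ∉ I) (hv₀ : {v} ∈ M) (w : V → ℝ) :
    ∃ T U : Finset V, v ∈ spanM M T ∧ insert v (I \ U) ∈ M ∧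
      ∀ x ∈ T, ∑ u ∈ U, w u ≤ if x ∈ I then w x else 0 := by
  by_cases hvI : insert v I ∈ M
  · refine ⟨{v}, ∅, Or.inl (Finset.mem_singleton_self v), by simpa using hvI, ?_⟩
    simp [hv]
  obtain ⟨D, hDI, hD, hdep, hexch⟩ := hM.exists_circuit_exchange hI hv hvI hv₀
  obtain ⟨u, hu, hmin⟩ := Finset.exists_min_image D w hD
  refine ⟨D, {u}, Or.inr ⟨D, subset_rfl, hM.mem_of_subset hI hDI, hdep⟩, ?_, fun x hx => ?_⟩
  · rw [Finset.sdiff_singleton_eq_erase]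
    exact hexch u hu
  · rw [Finset.sum_singleton, if_pos (hDI hx)]
    exact hmin x hx

end IsMatroid

theorem Finset.sum_sup_le_sum_sum {ι : Type*} (s : Finset ι) (U : ι → Finset V) {w : V → ℝ}
    (hw : ∀ v, 0 ≤ w v) : ∑ x ∈ s.sup U, w x ≤ ∑ i ∈ s, ∑ x ∈ U i, w x :=
  s.apply_sup_le_sum (f := fun S => ∑ x ∈ S, w x) Finset.sum_empty fun {S T} => by
    have hunion := Finset.sum_union_inter (s₁ := S) (s₂ := T) (f := w)
    have hinter := Finset.sum_nonneg (s := S ∩ T) fun x _ => hw x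
    simp only [Finset.sup_eq_union]
    linarith

theorem le_sum_sum_of_insert_sdiff_mem {ι : Type*} [Fintype ι] {M : ι → Set (Finset V)}
    {w : V → ℝ} (hM : ∀ i, IsMatroid (M i)) (hw : ∀ v, 0 ≤ w v)
    {I : Finset V} (hmax : ∀ J, (∀ i, J ∈ M i) → ∑ x ∈ J, w x ≤ ∑ x ∈ I, w x) {v : V}
    (hv : v ∉ I) (U : ι → Finset V) (hU : ∀ i, insert v (I \ U i) ∈ M i) :
    w v ≤ ∑ i, ∑ u ∈ U i, w u := by
  -- `insert v (I \ ⋃ i, U i)` is common independent, so it weighs no more than `I`.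
  set R := Finset.univ.sup U
  have hJ : ∀ i, insert v (I \ R) ∈ M i := fun i => (hM i).mem_of_subset (hU i)
    (Finset.insert_subset_insert v (Finset.sdiff_subset_sdiff subset_rfl
      (Finset.le_sup (Finset.mem_univ i))))
  have hJsum : ∑ x ∈ insert v (I \ R), w x = w v + ∑ x ∈ I \ R, w x :=
    Finset.sum_insert fun h => hv (Finset.mem_sdiff.1 h).1
  have hIsum := Finset.sum_inter_add_sum_sdiff I R w
  have hIR : ∑ x ∈ I ∩ R, w x ≤ ∑ x ∈ R, w x :=
    Finset.sum_le_sum_of_subset_of_nonneg Finset.inter_subset_right fun x _ _ => hw x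
  have hR := Finset.univ.sum_sup_le_sum_sum U hw
  linarith [hmax _ hJ]

section FractionalCover

variable {k : ℕ}

def FracCoversAt (M : Fin k → Set (Finset V)) (w : V → ℝ) (f : Fin k → V → ℝ) (v : V) : Prop :=
  ∃ (T : Fin k → Finset V) (r : Fin k → ℝ),
    (∀ i, v ∈ spanM (M i) (T i)) ∧ (∀ i, ∀ u ∈ T i, r i ≤ f i u) ∧ w v ≤ ∑ i, r i

variable {M : Fin k → Set (Finset V)} {w : V → ℝ}

theorem fracCoversAt_of_single {f : Fin k → V → ℝ} (hf : ∀ i x, 0 ≤ f i x) {v : V} (i₀ : Fin k)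
    {T₀ : Finset V} (hT₀ : v ∈ spanM (M i₀) T₀) (hle : ∀ u ∈ T₀, w v ≤ f i₀ u) :
    FracCoversAt M w f v := by
  refine ⟨Function.update (fun _ => {v}) i₀ T₀, Pi.single i₀ (w v), fun i => ?_, fun i => ?_, ?_⟩
  · rcases eq_or_ne i i₀ with rfl | hi
    · simpa using hT₀
    · rw [Function.update_of_ne hi]
      exact Or.inl (Finset.mem_singleton_self v)
  · rcases eq_or_ne i i₀ with rfl | hi
    · simpa using hle
    · simp [hi, hf]
  · simp

theorem isFracCover_ite_mem_of_max_weight [Fintype V] (hk : 0 < k) (hM : ∀ i, IsMatroid (M i))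
    (hw : ∀ v, 0 ≤ w v) {I : Finset V} (hI : ∀ i, I ∈ M i)
    (hmax : ∀ J, (∀ i, J ∈ M i) → ∑ x ∈ J, w x ≤ ∑ x ∈ I, w x) :
    IsFracCover k M w (fun _ x => if x ∈ I then w x else 0) := by
  have hf : ∀ (_ : Fin k) x, 0 ≤ if x ∈ I then w x else 0 := fun _ x => by
    split_ifs
    exacts [hw x, le_rfl]
  refine ⟨hf, fun v => ?_⟩
  show FracCoversAt M w _ v
  by_cases hvI : v ∈ I
  · exact fracCoversAt_of_single hf ⟨0, hk⟩ (Or.inl (Finset.mem_singleton_self v)) (by simp [hvI])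
  by_cases hloop : ∃ i, {v} ∉ M i
  · obtain ⟨i₀, hi₀⟩ := hloop
    exact fracCoversAt_of_single hf i₀ (Or.inr ⟨∅, subset_rfl, (hM i₀).1, by simpa using hi₀⟩)
      (by simp)
  push Not at hloop
  choose T U hspan hU hTU using fun i => (hM i).exists_span_exchange (hI i) hvI (hloop i) w
  exact ⟨T, fun i => ∑ u ∈ U i, w u, hspan, hTU,
    le_sum_sum_of_insert_sdiff_mem hM hw hmax hvI U hU⟩

end FractionalCover

end

/-- `τ*_w ≤ k · ν_w`: the fractional `w`-covering number of a `k`-tuple of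
matroids is at most `k` times the maximum `w`-weight of a common independent set. -/
theorem stmt_9 {V : Type*} [Fintype V] [DecidableEq V] (k : ℕ)
    (M : Fin k → Set (Finset V)) (hM : ∀ i, IsMatroid (M i))
    (w : V → ℝ) (hw : ∀ v, 0 ≤ w v) :
    sInf {t : ℝ | ∃ f : Fin k → V → ℝ, IsFracCover k M w f ∧ t = ∑ i, ∑ v, f i v}
      ≤ k * sSup {t : ℝ | ∃ I : Finset V, (∀ i, I ∈ M i) ∧ t = ∑ v ∈ I, w v} := by
  rcases Nat.eq_zero_or_pos k with rfl | hk
  · exact (Real.sInf_nonpos (by rintro _ ⟨f, -, rfl⟩; simp)).trans (by simp)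
  obtain ⟨I, hI, hmax⟩ := Set.exists_max_image {J : Finset V | ∀ i, J ∈ M i}
    (fun J => ∑ x ∈ J, w x) (Set.toFinite _) ⟨∅, fun i => (hM i).1⟩
  have hcoverBdd :
      BddBelow {t : ℝ | ∃ f : Fin k → V → ℝ, IsFracCover k M w f ∧ t = ∑ i, ∑ v, f i v} :=
    ⟨0, by
      rintro _ ⟨f, hf, rfl⟩
      exact Finset.sum_nonneg fun i _ => Finset.sum_nonneg fun v _ => hf.1 i v⟩
  have hindepBdd : BddAbove {t : ℝ | ∃ I : Finset V, (∀ i, I ∈ M i) ∧ t = ∑ v ∈ I, w v} :=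
    ((Set.finite_range fun J : Finset V => ∑ v ∈ J, w v).subset
      (by rintro _ ⟨J, -, rfl⟩; exact ⟨J, rfl⟩)).bddAbove
  calc _ ≤ ∑ i : Fin k, ∑ x, (if x ∈ I then w x else 0) :=
        csInf_le hcoverBdd ⟨_, isFracCover_ite_mem_of_max_weight hk hM hw hI hmax, rfl⟩
    _ = k * ∑ x ∈ I, w x := by simp [Finset.sum_ite_mem]
    _ ≤ _ := by gcongr; exact le_csSup hindepBdd ⟨I, hI, rfl⟩
end

section
/- Let H be a hypergraph on a finite vertex set V whose edges admit a proper edge coloring with m colors in which each color class is a matching (pairwise disjoint edges), and suppose H is the set of minimal non-faces of a complex C on V (i.e., H = min(C^c)). Then C is the intersection of m matroids on V. -/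
/-- Every non-face contains a minimal non-face. -/
lemma exists_min_nonface {V : Type*} [DecidableEq V] (C : Set (Finset V))
    (S : Finset V) (hS : S ∉ C) :
    ∃ e, e ⊆ S ∧ e ∉ C ∧ ∀ f, f ⊂ e → f ∈ C := by
  classical
  induction S using Finset.strongInduction with
  | _ S ih =>
    by_cases h : ∀ f, f ⊂ S → f ∈ C
    · exact ⟨S, subset_rfl, hS, h⟩
    · push_neg at h
      obtain ⟨f, hf, hfC⟩ := h
      obtain ⟨e, he1, he2, he3⟩ := ih f hf hfC
      exact ⟨e, he1.trans hf.subset, he2, he3⟩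

/-- If the hypergraph `H` of minimal non-faces of a complex `C` admits a
proper edge coloring with `m` colors in which each color class is a matching (pairwise
disjoint edges), then `C` is the intersection of `m` matroids on `V`. -/
theorem stmt_15 {V : Type*} [Fintype V] [DecidableEq V]
    (C : Set (Finset V)) (hne : C.Nonempty) (hdown : ∀ S ∈ C, ∀ T, T ⊆ S → T ∈ C)
    (H : Set (Finset V)) (hH : H = {e | e ∉ C ∧ ∀ f, f ⊂ e → f ∈ C})
    (m : ℕ) (col : Finset V → Fin m)
    (hcol : ∀ e ∈ H, ∀ f ∈ H, e ≠ f → col e = col f → Disjoint e f) :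
    ∃ M : Fin m → Set (Finset V), (∀ i, IsMatroid (M i)) ∧ C = ⋂ i, M i := by
  classical
  have hempty : (∅ : Finset V) ∈ C := by
    obtain ⟨S0, hS0⟩ := hne
    exact hdown S0 hS0 ∅ (Finset.empty_subset _)
  refine ⟨fun i => {S | ∀ e ∈ H, col e = i → ¬ e ⊆ S}, ?_, ?_⟩
  · intro i
    refine ⟨?_, ?_, ?_⟩
    · intro e heH _ hsub
      rw [hH] at heH
      exact heH.1 (by simpa [Finset.subset_empty.mp hsub] using hempty)
    · intro S hS T hTS e heH hcoli hsub
      exact hS e heH hcoli (hsub.trans hTS)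
    · intro S hS T hT hcard
      by_contra hcon
      push_neg at hcon
      have hfun : ∀ v ∈ T \ S, ∃ e ∈ H, col e = i ∧ e ⊆ insert v S := by
        intro v hv
        have h := hcon v hv
        simp only [Set.mem_setOf_eq] at h
        push_neg at h
        exact h
      choose! g hg1 hg2 hg3 using hfun
      have hvmem : ∀ v ∈ T \ S, v ∈ g v := by
        intro v hv
        by_contra hvn
        have hsub : g v ⊆ S := by
          intro x hx
          rcases Finset.mem_insert.mp (hg3 v hv hx) with h | h
          · exact absurd (h ▸ hx) hvn
          · exact h
        exact hS (g v) (hg1 v hv) (hg2 v hv) hsub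
      set I : Finset (Finset V) := (T \ S).image g with hI
      have hIH : ∀ e ∈ I, e ∈ H ∧ col e = i := by
        intro e he
        obtain ⟨v, hv, rfl⟩ := Finset.mem_image.mp he
        exact ⟨hg1 v hv, hg2 v hv⟩
      have hdisj : ∀ e ∈ I, ∀ f ∈ I, e ≠ f → Disjoint e f := by
        intro e he f hf hef
        exact hcol e (hIH e he).1 f (hIH f hf).1 hef
          ((hIH e he).2.trans (hIH f hf).2.symm)
      -- per-edge inequality
      have key : ∀ e ∈ I, ((T \ S) ∩ e).card ≤ ((S \ T) ∩ e).card := by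
        intro e he
        obtain ⟨v, hv, rfl⟩ := Finset.mem_image.mp he
        set e := g v
        have hvS : v ∉ S := (Finset.mem_sdiff.mp hv).2
        have hve : v ∈ e := hvmem v hv
        -- card (e ∩ T) < card e
        have hT' : ¬ e ⊆ T := hT e (hg1 v hv) (hg2 v hv)
        have h1 : (e ∩ T).card < e.card := by
          apply Finset.card_lt_card
          refine ⟨Finset.inter_subset_left, ?_⟩
          intro hsub
          exact hT' (fun x hx => (Finset.mem_inter.mp (hsub hx)).2)
        -- card (e ∩ S) ≥ card e - 1
        have hsubS : e \ {v} ⊆ e ∩ S := by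
          intro x hx
          obtain ⟨hxe, hxv⟩ := Finset.mem_sdiff.mp hx
          refine Finset.mem_inter.mpr ⟨hxe, ?_⟩
          rcases Finset.mem_insert.mp (hg3 v hv hxe) with h | h
          · exact absurd (Finset.mem_singleton.mpr h) hxv
          · exact h
        have h2 : e.card - 1 ≤ (e ∩ S).card := by
          have := Finset.card_le_card hsubS
          rwa [Finset.card_sdiff_of_subset (Finset.singleton_subset_iff.mpr hve),
            Finset.card_singleton] at this
        have h3 : (e ∩ T).card ≤ (e ∩ S).card := by omega
        have e1 : ((e ∩ T) \ (e ∩ S)).card + ((e ∩ T) ∩ (e ∩ S)).card = (e ∩ T).card :=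
          Finset.card_sdiff_add_card_inter _ _
        have e2 : ((e ∩ S) \ (e ∩ T)).card + ((e ∩ S) ∩ (e ∩ T)).card = (e ∩ S).card :=
          Finset.card_sdiff_add_card_inter _ _
        have e3 : ((e ∩ T) ∩ (e ∩ S)).card = ((e ∩ S) ∩ (e ∩ T)).card := by rw [Finset.inter_comm]
        have e4 : (T \ S) ∩ e = (e ∩ T) \ (e ∩ S) := by
          ext x
          simp [Finset.mem_sdiff, Finset.mem_inter]
          tauto
        have e5 : (S \ T) ∩ e = (e ∩ S) \ (e ∩ T) := by
          ext x
          simp [Finset.mem_sdiff, Finset.mem_inter]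
          tauto
        rw [e4, e5]
        omega
      -- counting
      have hcover : T \ S ⊆ I.biUnion (fun e => (T \ S) ∩ e) := by
        intro v hv
        exact Finset.mem_biUnion.mpr ⟨g v, Finset.mem_image_of_mem g hv,
          Finset.mem_inter.mpr ⟨hv, hvmem v hv⟩⟩
      have hd1 : (I : Set (Finset V)).PairwiseDisjoint (fun e => (T \ S) ∩ e) := by
        intro e he f hf hef
        exact (hdisj e he f hf hef).mono Finset.inter_subset_right
          Finset.inter_subset_right
      have hd2 : (I : Set (Finset V)).PairwiseDisjoint (fun e => (S \ T) ∩ e) := by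
        intro e he f hf hef
        exact (hdisj e he f hf hef).mono Finset.inter_subset_right
          Finset.inter_subset_right
      have c1 : (T \ S).card ≤ ∑ e ∈ I, ((T \ S) ∩ e).card := by
        calc (T \ S).card ≤ (I.biUnion (fun e => (T \ S) ∩ e)).card :=
              Finset.card_le_card hcover
          _ = ∑ e ∈ I, ((T \ S) ∩ e).card := Finset.card_biUnion (fun e he f hf h => hd1 he hf h)
      have c2 : ∑ e ∈ I, ((S \ T) ∩ e).card ≤ (S \ T).card := by
        calc ∑ e ∈ I, ((S \ T) ∩ e).card
            = (I.biUnion (fun e => (S \ T) ∩ e)).card :=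
              (Finset.card_biUnion (fun e he f hf h => hd2 he hf h)).symm
          _ ≤ (S \ T).card := Finset.card_le_card
              (Finset.biUnion_subset.mpr fun e _ => Finset.inter_subset_left)
      have c3 : ∑ e ∈ I, ((T \ S) ∩ e).card ≤ ∑ e ∈ I, ((S \ T) ∩ e).card :=
        Finset.sum_le_sum key
      have cT : (T \ S).card + (T ∩ S).card = T.card := Finset.card_sdiff_add_card_inter _ _
      have cS : (S \ T).card + (S ∩ T).card = S.card := Finset.card_sdiff_add_card_inter _ _
      have : (T ∩ S).card = (S ∩ T).card := by rw [Finset.inter_comm]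
      omega
  · ext S
    simp only [Set.mem_iInter, Set.mem_setOf_eq]
    constructor
    · intro hSC i e heH _ hsub
      rw [hH] at heH
      exact heH.1 (hdown S hSC e hsub)
    · intro hS
      by_contra hSC
      obtain ⟨e, he1, he2, he3⟩ := exists_min_nonface C S hSC
      have heH : e ∈ H := by rw [hH]; exact ⟨he2, he3⟩
      exact hS (col e) e heH rfl he1
end
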